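/- The subgroup N¹_{pq} = {(a^l,1) : 0 ≤ l ≤ pq−1} is the smallest normal subgroup of G_{p,q} with nilpotent quotient, i.e. G_{p,q}^{nil} = N¹_{pq}. Moreover, if x and y are elements of G_{p,q} of even order with x N¹_{pq} = y N¹_{pq}, then x and y are conjugate in G_{p,q}. -/

import Mathlib

open Multiplicative

namespace Mizerka

/-- The standing hypotheses: `p` and `q` are odd primes with `q ∣ p - 1`, and `i` is a
natural number with `i ≡ 1 (mod q)` whose multiplicative order modulo `p` equals `q`. -/
structure Hyp (p q i : ℕ) : Prop where
  hp : Nat.Prime p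
  hq : Nat.Prime q
  hoddp : Odd p
  hoddq : Odd q
  hdvd : q ∣ p - 1
  hmod : i ≡ 1 [MOD q]
  hord : orderOf (i : ZMod p) = q

namespace Hyp

variable {p q i : ℕ}

theorem coprime_q (h : Hyp p q i) : Nat.Coprime i q := by
  have h1 : i % q = 1 % q := h.hmod
  unfold Nat.Coprime
  rw [Nat.gcd_comm, Nat.gcd_rec, h1, ← Nat.gcd_rec, Nat.gcd_one_right]

theorem coprime_p (h : Hyp p q i) : Nat.Coprime i p := by
  haveI : NeZero p := ⟨h.hp.ne_zero⟩
  have hq1 : q - 1 + 1 = q := Nat.succ_pred_eq_of_pos h.hq.pos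
  have hmul : (i : ZMod p) * (i : ZMod p) ^ (q - 1) = 1 := by
    rw [← pow_succ', hq1, ← h.hord, pow_orderOf_eq_one]
  exact (ZMod.isUnit_iff_coprime i p).mp (isUnit_iff_exists_inv.mpr ⟨_, hmul⟩)

theorem coprime (h : Hyp p q i) : Nat.Coprime i (p * q) :=
  Nat.Coprime.mul_right h.coprime_p h.coprime_q

theorem pow_q_modeq (h : Hyp p q i) : i ^ q ≡ 1 [MOD p * q] := by
  have hpq : p ≠ q := by
    have h1 : 0 < p - 1 := by have := h.hp.two_le; omega
    have := Nat.le_of_dvd h1 h.hdvd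
    omega
  have hc : Nat.Coprime p q := (Nat.coprime_primes h.hp h.hq).mpr hpq
  rw [← Nat.modEq_and_modEq_iff_modEq_mul hc]
  constructor
  · haveI : NeZero p := ⟨h.hp.ne_zero⟩
    have hcast : ((i ^ q : ℕ) : ZMod p) = ((1 : ℕ) : ZMod p) := by
      push_cast
      rw [← h.hord, pow_orderOf_eq_one]
    exact (ZMod.natCast_eq_natCast_iff _ _ _).mp hcast
  · calc i ^ q ≡ 1 ^ q [MOD q] := h.hmod.pow q
      _ = 1 := one_pow q

/-- The unit of `ZMod (p*q)` determined by `i`. -/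
def unit (h : Hyp p q i) : (ZMod (p * q))ˣ := ZMod.unitOfCoprime i h.coprime

/-- The unit of `ZMod p` determined by `i`. -/
def unitP (h : Hyp p q i) : (ZMod p)ˣ := ZMod.unitOfCoprime i h.coprime_p

theorem unit_pow (h : Hyp p q i) : h.unit ^ q = 1 := by
  apply Units.ext
  have h2 : ((i ^ q : ℕ) : ZMod (p * q)) = ((1 : ℕ) : ZMod (p * q)) :=
    (ZMod.natCast_eq_natCast_iff _ _ _).mpr h.pow_q_modeq
  push_cast at h2
  simpa [Hyp.unit] using h2

theorem unitP_pow (h : Hyp p q i) : h.unitP ^ q = 1 := by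
  apply Units.ext
  have h2 : (i : ZMod p) ^ q = 1 := by rw [← h.hord]; exact pow_orderOf_eq_one _
  simpa [Hyp.unitP] using h2

end Hyp

/-- Multiplication by a unit, as an automorphism of the (multiplicatively written)
cyclic group `ZMod n`. -/
def zmodMulAut (n : ℕ) : (ZMod n)ˣ →* MulAut (Multiplicative (ZMod n)) where
  toFun u :=
    { toFun := fun x => ofAdd ((u : ZMod n) * x.toAdd)
      invFun := fun x => ofAdd (((u⁻¹ : (ZMod n)ˣ) : ZMod n) * x.toAdd)
      left_inv := fun x => by simp
      right_inv := fun x => by simp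
      map_mul' := fun x y => by simp [mul_add, ← ofAdd_add] }
  map_one' := by ext x; simp
  map_mul' u v := by ext x; simp [mul_assoc]

/-- The function underlying the automorphism of the dihedral group induced by
multiplication by a unit on the rotation part. -/
def dihedralAutFun (n : ℕ) (u : (ZMod n)ˣ) : DihedralGroup n → DihedralGroup n
  | .r j => .r ((u : ZMod n) * j)
  | .sr j => .sr ((u : ZMod n) * j)

/-- Multiplication of indices by a unit, as an automorphism of the dihedral group:
`a ↦ a^u`, `b ↦ b`. -/
def dihedralAut (n : ℕ) : (ZMod n)ˣ →* MulAut (DihedralGroup n) where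
  toFun u :=
    { toFun := dihedralAutFun n u
      invFun := dihedralAutFun n u⁻¹
      left_inv := fun x => by cases x <;> simp [dihedralAutFun]
      right_inv := fun x => by cases x <;> simp [dihedralAutFun]
      map_mul' := fun x y => by cases x <;> cases y <;> simp [dihedralAutFun, mul_add, mul_sub] }
  map_one' := by ext x; cases x <;> simp [dihedralAutFun]
  map_mul' u v := by ext x; cases x <;> simp [dihedralAutFun, mul_assoc]

/-- The homomorphism `ZMod q →* G` (written multiplicatively) sending `1` to a fixed
element `g` with `g ^ q = 1`. -/
def zmodPow {G : Type*} [Group G] (q : ℕ) [NeZero q] (g : G) (hg : g ^ q = 1) :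
    Multiplicative (ZMod q) →* G where
  toFun x := g ^ (toAdd x).val
  map_one' := by
    show g ^ (toAdd (1 : Multiplicative (ZMod q))).val = 1
    rw [toAdd_one, ZMod.val_zero, pow_zero]
  map_mul' x y := by
    have key : ∀ m : ℕ, g ^ (m % q) = g ^ m := fun m => by
      conv_rhs => rw [← Nat.div_add_mod m q]
      rw [pow_add, pow_mul, hg, one_pow, one_mul]
    show g ^ (toAdd (x * y)).val = g ^ (toAdd x).val * g ^ (toAdd y).val
    rw [toAdd_mul, ZMod.val_add, key, pow_add]

namespace Hyp

variable {p q i : ℕ}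

/-- The action of `C_q` on `C_{pq}` sending the generator to multiplication by `i`. -/
def phiN (h : Hyp p q i) : Multiplicative (ZMod q) →* MulAut (Multiplicative (ZMod (p * q))) :=
  haveI : NeZero q := ⟨h.hq.ne_zero⟩
  zmodPow q (zmodMulAut (p * q) h.unit) (by rw [← map_pow, h.unit_pow, map_one])

/-- The action of `C_q` on `D_{2pq}` sending the generator to `τ` (`τ(a) = a^i`, `τ(b) = b`). -/
def phiG (h : Hyp p q i) : Multiplicative (ZMod q) →* MulAut (DihedralGroup (p * q)) :=
  haveI : NeZero q := ⟨h.hq.ne_zero⟩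
  zmodPow q (dihedralAut (p * q) h.unit) (by rw [← map_pow, h.unit_pow, map_one])

/-- The action of `C_q` on `C_p` sending the generator to multiplication by `i`. -/
def phiF (h : Hyp p q i) : Multiplicative (ZMod q) →* MulAut (Multiplicative (ZMod p)) :=
  haveI : NeZero q := ⟨h.hq.ne_zero⟩
  zmodPow q (zmodMulAut p h.unitP) (by rw [← map_pow, h.unitP_pow, map_one])

end Hyp

/-- The group `N_{pq²} = ⟨a, c ∣ a^{pq} = c^q = 1, c a c⁻¹ = a^i⟩ = C_{pq} ⋊ C_q`. -/
abbrev Npq2 {p q i : ℕ} (h : Hyp p q i) : Type :=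
  Multiplicative (ZMod (p * q)) ⋊[h.phiN] Multiplicative (ZMod q)

/-- The group `G_{p,q} = D_{2pq} ⋊_φ C_q`. -/
abbrev Gpq {p q i : ℕ} (h : Hyp p q i) : Type :=
  DihedralGroup (p * q) ⋊[h.phiG] Multiplicative (ZMod q)

/-- The Frobenius group `F_{p,q} = C_p ⋊ C_q` (the nonabelian group of order `pq`). -/
abbrev Fpq {p q i : ℕ} (h : Hyp p q i) : Type :=
  Multiplicative (ZMod p) ⋊[h.phiF] Multiplicative (ZMod q)

variable {p q i : ℕ}

/-- The generator `a` of `N_{pq²}`. -/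
def aN (h : Hyp p q i) : Npq2 h := SemidirectProduct.inl (ofAdd 1)

/-- The generator `c` of `N_{pq²}`. -/
def cN (h : Hyp p q i) : Npq2 h := SemidirectProduct.inr (ofAdd 1)

/-- The generator `a` of `G_{p,q}`. -/
def aG (h : Hyp p q i) : Gpq h := SemidirectProduct.inl (DihedralGroup.r 1)

/-- The generator `b` of `G_{p,q}`. -/
def bG (h : Hyp p q i) : Gpq h := SemidirectProduct.inl (DihedralGroup.sr 0)

/-- The generator `c` of `G_{p,q}`. -/
def cG (h : Hyp p q i) : Gpq h := SemidirectProduct.inr (ofAdd 1)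

/-- The real conjugacy class `(g)^± = (g) ∪ (g⁻¹)`. -/
def realClass {G : Type*} [Group G] (g : G) : Set G := {x | IsConj g x ∨ IsConj g⁻¹ x}

/-- `N` is a normal subgroup whose quotient is an `ℓ`-group (the quotient has `ℓ`-power order,
i.e. `N` has `ℓ`-power index). -/
def OQuot {G : Type*} [Group G] (ℓ : ℕ) (N : Subgroup G) : Prop :=
  N.Normal ∧ ∃ k : ℕ, N.index = ℓ ^ k

/-- `H` is a large subgroup of `G`: it contains `O^ℓ(G)`, the smallest normal subgroup
with `ℓ`-group quotient, for some prime `ℓ`. -/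
def IsLarge {G : Type*} [Group G] (H : Subgroup G) : Prop :=
  ∃ ℓ : ℕ, Nat.Prime ℓ ∧
    ∃ N : Subgroup G, OQuot ℓ N ∧ (∀ M : Subgroup G, OQuot ℓ M → N ≤ M) ∧ N ≤ H

section Reps

variable {k : Type*} [CommSemiring k] {G : Type*} [Group G]

/-- The subspace `V^H` of `H`-fixed vectors of a representation. -/
def fixedPts {V : Type*} [AddCommMonoid V] [Module k V]
    (ρ : Representation k G V) (H : Subgroup G) : Submodule k V where
  carrier := {v | ∀ g ∈ H, ρ g v = v}
  add_mem' := by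
    intro a b ha hb g hg
    rw [map_add, ha g hg, hb g hg]
  zero_mem' := by
    intro g hg
    rw [map_zero]
  smul_mem' := by
    intro c v hv g hg
    rw [map_smul, hv g hg]

end Reps

/-- The weak gap condition for a real representation: `dim V^P ≥ 2 dim V^H` for all
`P < H ≤ G` with `P` of prime power order. -/
def WeakGap {G : Type*} [Group G] {V : Type*} [AddCommGroup V] [Module ℝ V]
    (ρ : Representation ℝ G V) : Prop :=
  ∀ P H : Subgroup G, P < H → (∃ ℓ k : ℕ, Nat.Prime ℓ ∧ Nat.card P = ℓ ^ k) →
    2 * Module.finrank ℝ (fixedPts ρ H) ≤ Module.finrank ℝ (fixedPts ρ P)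

/-- Isomorphism of real representations: an equivariant linear equivalence. -/
def RepIso {G : Type*} [Group G] {U V : Type*} [AddCommGroup U] [Module ℝ U]
    [AddCommGroup V] [Module ℝ V]
    (ρU : Representation ℝ G U) (ρV : Representation ℝ G V) : Prop :=
  ∃ e : U ≃ₗ[ℝ] V, ∀ (g : G) (u : U), e (ρU g u) = ρV g (e u)

/-- Two real representations are `𝒫`-matched if their restrictions to every subgroup of
prime power order are isomorphic. -/
def PMatched {G : Type*} [Group G] {U V : Type*} [AddCommGroup U] [Module ℝ U]
    [AddCommGroup V] [Module ℝ V]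
    (ρU : Representation ℝ G U) (ρV : Representation ℝ G V) : Prop :=
  ∀ P : Subgroup G, (∃ ℓ k : ℕ, Nat.Prime ℓ ∧ Nat.card P = ℓ ^ k) →
    RepIso (ρU.comp P.subtype) (ρV.comp P.subtype)

/-- A bundled finite-dimensional-free real representation of `G`. -/
structure RealRep (G : Type*) [Group G] where
  carrier : Type
  [acg : AddCommGroup carrier]
  [mod : Module ℝ carrier]
  rho : Representation ℝ G carrier

attribute [instance] RealRep.acg RealRep.mod

theorem dihedralAut_pow_r (n : ℕ) (u : (ZMod n)ˣ) (k : ℕ) (m : ZMod n) :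
    ((dihedralAut n u) ^ k) (DihedralGroup.r m)
      = DihedralGroup.r (((u ^ k : (ZMod n)ˣ) : ZMod n) * m) := by
  induction k generalizing m with
  | zero => simp
  | succ k ih =>
    rw [pow_succ, MulAut.mul_apply]
    have h1 : (dihedralAut n u) (DihedralGroup.r m) = DihedralGroup.r ((u : ZMod n) * m) := rfl
    rw [h1, ih, pow_succ, Units.val_mul, mul_assoc]

theorem Hyp.phiG_r (h : Hyp p q i) (z : Multiplicative (ZMod q)) (m : ZMod (p * q)) :
    h.phiG z (DihedralGroup.r m)
      = DihedralGroup.r (((h.unit ^ (toAdd z).val : (ZMod (p * q))ˣ) : ZMod (p * q)) * m) := by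
  have h1 : h.phiG z = (dihedralAut (p * q) h.unit) ^ (toAdd z).val := rfl
  rw [h1, dihedralAut_pow_r]

theorem r_inv (n : ℕ) (m : ZMod n) : (DihedralGroup.r m)⁻¹ = DihedralGroup.r (-m) := rfl

/-- The subgroup `N_{pq²} = {(aˡ, cᵐ)}` of `G_{p,q}`. -/
def NSub (h : Hyp p q i) : Subgroup (Gpq h) where
  carrier := {x | ∃ l : ZMod (p * q), x.left = DihedralGroup.r l}
  one_mem' := ⟨0, rfl⟩
  mul_mem' := by
    rintro x y ⟨lx, hx⟩ ⟨ly, hy⟩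
    refine ⟨lx + (h.unit ^ (toAdd x.right).val : (ZMod (p * q))ˣ) * ly, ?_⟩
    rw [SemidirectProduct.mul_left, hx, hy, h.phiG_r, DihedralGroup.r_mul_r]
  inv_mem' := by
    rintro x ⟨lx, hx⟩
    refine ⟨-((h.unit ^ (toAdd x.right⁻¹).val : (ZMod (p * q))ˣ) * lx), ?_⟩
    rw [SemidirectProduct.inv_left, hx, r_inv, h.phiG_r]
    congr 1
    ring

/-- The subgroup `N_{2pq} = {(bᵉaˡ, 1)} ≅ D_{2pq}` of `G_{p,q}`. -/
def N2pqSub (h : Hyp p q i) : Subgroup (Gpq h) :=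
  MonoidHom.ker SemidirectProduct.rightHom

/-- The subgroup `N¹_{pq} = {(aˡ, 1)}` of `G_{p,q}`. -/
def NpqOneSub (h : Hyp p q i) : Subgroup (Gpq h) where
  carrier := {x | x.right = 1 ∧ ∃ l : ZMod (p * q), x.left = DihedralGroup.r l}
  one_mem' := ⟨rfl, 0, rfl⟩
  mul_mem' := by
    rintro x y ⟨hx1, lx, hx⟩ ⟨hy1, ly, hy⟩
    refine ⟨by rw [SemidirectProduct.mul_right, hx1, hy1, mul_one],
      lx + (h.unit ^ (toAdd x.right).val : (ZMod (p * q))ˣ) * ly, ?_⟩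
    rw [SemidirectProduct.mul_left, hx, hy, h.phiG_r, DihedralGroup.r_mul_r]
  inv_mem' := by
    rintro x ⟨hx1, lx, hx⟩
    refine ⟨by rw [SemidirectProduct.inv_right, hx1, inv_one],
      -((h.unit ^ (toAdd x.right⁻¹).val : (ZMod (p * q))ˣ) * lx), ?_⟩
    rw [SemidirectProduct.inv_left, hx, r_inv, h.phiG_r]
    congr 1
    ring

/-- The subgroup `N²_{pq} = {(a^{qs}, cᵐ)}` of `G_{p,q}`. -/
def NpqTwoSub (h : Hyp p q i) : Subgroup (Gpq h) where
  carrier := {x | ∃ s : ZMod (p * q), x.left = DihedralGroup.r ((q : ZMod (p * q)) * s)}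
  one_mem' := ⟨0, by simp⟩
  mul_mem' := by
    rintro x y ⟨sx, hx⟩ ⟨sy, hy⟩
    refine ⟨sx + (h.unit ^ (toAdd x.right).val : (ZMod (p * q))ˣ) * sy, ?_⟩
    rw [SemidirectProduct.mul_left, hx, hy, h.phiG_r, DihedralGroup.r_mul_r]
    congr 1
    ring
  inv_mem' := by
    rintro x ⟨sx, hx⟩
    refine ⟨-((h.unit ^ (toAdd x.right⁻¹).val : (ZMod (p * q))ˣ) * sx), ?_⟩
    rw [SemidirectProduct.inv_left, hx, r_inv, h.phiG_r]
    congr 1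
    ring

/-- The subgroup `N_p = {(a^{qs}, 1)}` of `G_{p,q}`. -/
def NpSub (h : Hyp p q i) : Subgroup (Gpq h) where
  carrier := {x | x.right = 1 ∧ ∃ s : ZMod (p * q), x.left = DihedralGroup.r ((q : ZMod (p * q)) * s)}
  one_mem' := ⟨rfl, 0, by simp⟩
  mul_mem' := by
    rintro x y ⟨hx1, sx, hx⟩ ⟨hy1, sy, hy⟩
    refine ⟨by rw [SemidirectProduct.mul_right, hx1, hy1, mul_one],
      sx + (h.unit ^ (toAdd x.right).val : (ZMod (p * q))ˣ) * sy, ?_⟩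
    rw [SemidirectProduct.mul_left, hx, hy, h.phiG_r, DihedralGroup.r_mul_r]
    congr 1
    ring
  inv_mem' := by
    rintro x ⟨hx1, sx, hx⟩
    refine ⟨by rw [SemidirectProduct.inv_right, hx1, inv_one],
      -((h.unit ^ (toAdd x.right⁻¹).val : (ZMod (p * q))ˣ) * sx), ?_⟩
    rw [SemidirectProduct.inv_left, hx, r_inv, h.phiG_r]
    congr 1
    ring

/-- The subgroup `N_q = {(a^{ps}, 1)}` of `G_{p,q}`. -/
def NqSub (h : Hyp p q i) : Subgroup (Gpq h) where
  carrier := {x | x.right = 1 ∧ ∃ s : ZMod (p * q), x.left = DihedralGroup.r ((p : ZMod (p * q)) * s)}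
  one_mem' := ⟨rfl, 0, by simp⟩
  mul_mem' := by
    rintro x y ⟨hx1, sx, hx⟩ ⟨hy1, sy, hy⟩
    refine ⟨by rw [SemidirectProduct.mul_right, hx1, hy1, mul_one],
      sx + (h.unit ^ (toAdd x.right).val : (ZMod (p * q))ˣ) * sy, ?_⟩
    rw [SemidirectProduct.mul_left, hx, hy, h.phiG_r, DihedralGroup.r_mul_r]
    congr 1
    ring
  inv_mem' := by
    rintro x ⟨hx1, sx, hx⟩
    refine ⟨by rw [SemidirectProduct.inv_right, hx1, inv_one],
      -((h.unit ^ (toAdd x.right⁻¹).val : (ZMod (p * q))ˣ) * sx), ?_⟩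
    rw [SemidirectProduct.inv_left, hx, r_inv, h.phiG_r]
    congr 1
    ring

end Mizerka

/-! The parity of the dihedral part together with the `C_q`-coordinate maps `G_{p,q}` onto the
abelian group `C₂ × C_q` with kernel `N¹_{pq}`. Conversely, `pq` is odd, so `a = ⁅a ^ k, b⁆` for
`2k ≡ 1 (mod pq)`; hence `a` lies in every term of the lower central series and dies in every
nilpotent quotient.

If the dihedral part of `x` is a rotation then `x ^ (q · pq) = 1`, so an element of even order is
`(b aʲ, cᵐ)`. Two such elements in one coset of `N¹_{pq}` differ only in `j`, and conjugating by
`aˢ` shifts `j` by `(1 + iᵐ) s`. This coefficient is a unit modulo `pq`: it is `2` modulo `q`, and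
modulo `p` it is nonzero because `i` has odd order `q`, so `iᵐ ≠ -1`. -/

open scoped commutatorElement

theorem eq_one_of_commutatorElement_pow_eq_self {G : Type*} [Group G] [Group.IsNilpotent G]
    {g b : G} {k : ℕ} (hg : ⁅g ^ k, b⁆ = g) : g = 1 := by
  have hmem : ∀ n, g ∈ (⊤ : Subgroup G).lowerCentralSeries n := by
    intro n
    induction n with
    | zero => exact Subgroup.mem_top g
    | succ n ih =>
      rw [← hg]
      exact Subgroup.commutator_mem_commutator (pow_mem ih k) (Subgroup.mem_top b)
  obtain ⟨n, hn⟩ := Subgroup.nilpotent_iff_lowerCentralSeries.mp ‹Group.IsNilpotent G›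
  simpa [hn] using hmem n

theorem isNilpotent_quotient_of_eq_ker {G A : Type*} [Group G] [CommGroup A] (f : G →* A)
    {N : Subgroup G} [N.Normal] (hN : N = f.ker) : Group.IsNilpotent (G ⧸ N) := by
  subst hN
  exact Group.nilpotent_of_mulEquiv (QuotientGroup.quotientKerEquivRange f).symm

theorem pow_ne_neg_one_of_odd_orderOf {R : Type*} [Ring R] (hR : (-1 : R) ≠ 1) {a : R}
    (ha : Odd (orderOf a)) (w : ℕ) : a ^ w ≠ -1 := by
  intro hw
  have hdvd_two : orderOf (a ^ w) ∣ 2 := orderOf_dvd_of_pow_eq_one (by rw [hw]; norm_num)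
  have hord : orderOf (a ^ w) = 1 :=
    Nat.eq_one_of_dvd_coprimes (Nat.coprime_two_left.mpr ha) hdvd_two (orderOf_pow_dvd w)
  exact hR (hw ▸ orderOf_eq_one_iff.mp hord)

namespace DihedralGroup

def parity (n : ℕ) : DihedralGroup n →* Multiplicative (ZMod 2) where
  toFun
    | r _ => 1
    | sr _ => ofAdd 1
  map_one' := rfl
  map_mul' := by
    rintro (a | a) (b | b)
    iterate 3 rfl
    exact (by decide : (1 : Multiplicative (ZMod 2)) = ofAdd 1 * ofAdd 1)

variable {n : ℕ}

theorem commutatorElement_r_sr (k j : ZMod n) : ⁅r k, sr j⁆ = r (2 * k) := by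
  rw [commutatorElement_def, inv_r, inv_sr, r_mul_sr, sr_mul_r, sr_mul_sr]
  ring_nf

theorem map_r_eq_one_of_odd {Q : Type*} [Group Q] [Group.IsNilpotent Q] (hn : Odd n)
    (f : DihedralGroup n →* Q) (l : ZMod n) : f (r l) = 1 := by
  obtain ⟨k, rfl⟩ := hn
  have hr1 : f (r 1) = 1 := by
    refine eq_one_of_commutatorElement_pow_eq_self (b := f (sr 0)) (k := k + 1) ?_
    rw [← map_pow, ← map_commutatorElement, r_one_pow, commutatorElement_r_sr]
    have hzero : ((2 * k + 1 : ℕ) : ZMod (2 * k + 1)) = 0 := ZMod.natCast_self _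
    push_cast at hzero ⊢
    congr 2
    linear_combination hzero
  rw [← ZMod.natCast_zmod_val l, ← r_one_pow, map_pow, hr1, one_pow]

@[simp]
theorem parity_r (j : ZMod n) : parity n (r j) = 1 := rfl

@[simp]
theorem parity_sr (j : ZMod n) : parity n (sr j) = ofAdd 1 := rfl

theorem parity_eq_one_iff {x : DihedralGroup n} : parity n x = 1 ↔ ∃ j, x = r j := by
  cases x with
  | r j => simp
  | sr j => simp only [parity_sr, reduceCtorEq, exists_const, iff_false]; decide

end DihedralGroup

open DihedralGroup

theorem Multiplicative.zmod_pow_eq_one (q : ℕ) (z : Multiplicative (ZMod q)) : z ^ q = 1 := by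
  rw [← ofAdd_toAdd z, ← ofAdd_nsmul, nsmul_eq_mul, ZMod.natCast_self, zero_mul, ofAdd_zero]

namespace Mizerka

namespace Hyp

variable {p q i : ℕ}

theorem phiG_apply (h : Hyp p q i) (z : Multiplicative (ZMod q)) :
    h.phiG z = dihedralAut (p * q) (h.unit ^ (toAdd z).val) :=
  (map_pow (dihedralAut (p * q)) h.unit _).symm

theorem phiG_sr (h : Hyp p q i) (z : Multiplicative (ZMod q)) (m : ZMod (p * q)) :
    h.phiG z (sr m) = sr (((h.unit ^ (toAdd z).val : (ZMod (p * q))ˣ) : ZMod (p * q)) * m) := by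
  rw [phiG_apply]
  rfl

theorem parity_phiG (h : Hyp p q i) (z : Multiplicative (ZMod q)) (d : DihedralGroup (p * q)) :
    parity (p * q) (h.phiG z d) = parity (p * q) d := by
  cases d with
  | r m => rw [h.phiG_r, parity_r, parity_r]
  | sr m => rw [h.phiG_sr, parity_sr, parity_sr]

def parityRight (h : Hyp p q i) :
    Gpq h →* Multiplicative (ZMod 2) × Multiplicative (ZMod q) :=
  SemidirectProduct.lift ((parity (p * q)).prod 1) (MonoidHom.inr _ _) fun z => by
    ext d <;> simp [h.parity_phiG]

theorem parityRight_apply (h : Hyp p q i) (x : Gpq h) :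
    h.parityRight x = (parity (p * q) x.left, x.right) :=
  Prod.ext (mul_one _) (one_mul _)

theorem NpqOneSub_eq_ker (h : Hyp p q i) : NpqOneSub h = h.parityRight.ker := by
  ext x
  rw [MonoidHom.mem_ker, parityRight_apply, Prod.mk_eq_one, parity_eq_one_iff, and_comm]
  rfl

theorem NpqOneSub_le_of_isNilpotent (h : Hyp p q i) (N : Subgroup (Gpq h)) [N.Normal]
    [Group.IsNilpotent (Gpq h ⧸ N)] : NpqOneSub h ≤ N := by
  rintro x ⟨hx, l, hl⟩
  have hmk := map_r_eq_one_of_odd (h.hoddp.mul h.hoddq)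
    ((QuotientGroup.mk' N).comp SemidirectProduct.inl) l
  rw [← SemidirectProduct.inl_left_mul_inr_right x, hl, hx, map_one, mul_one]
  exact (QuotientGroup.eq_one_iff _).mp hmk

theorem pow_eq_one_of_left_eq_r (h : Hyp p q i) {x : Gpq h} {j : ZMod (p * q)}
    (hx : x.left = r j) : x ^ (q * (p * q)) = 1 := by
  have hxq : x ^ q ∈ NpqOneSub h := by
    rw [NpqOneSub_eq_ker, MonoidHom.mem_ker, map_pow, parityRight_apply, hx, parity_r,
      Prod.pow_mk, one_pow, Multiplicative.zmod_pow_eq_one, Prod.mk_one_one]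
  obtain ⟨hr, l, hl⟩ := hxq
  rw [pow_mul, ← SemidirectProduct.inl_left_mul_inr_right (x ^ q), hl, hr, map_one, mul_one,
    ← map_pow, r_pow, ZMod.natCast_self, mul_zero, r_zero, map_one]

theorem exists_left_eq_sr_of_two_dvd_orderOf (h : Hyp p q i) {x : Gpq h}
    (hx : 2 ∣ orderOf x) : ∃ j, x.left = sr j := by
  rcases hl : x.left with j | j
  · have hodd : Odd (q * (p * q)) := h.hoddq.mul (h.hoddp.mul h.hoddq)
    have hdvd := hx.trans (orderOf_dvd_of_pow_eq_one (h.pow_eq_one_of_left_eq_r hl))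
    exact absurd (even_iff_two_dvd.mpr hdvd) (Nat.not_even_iff_odd.mpr hodd)
  · exact ⟨j, rfl⟩

theorem isUnit_one_add_unit_pow (h : Hyp p q i) (w : ℕ) :
    IsUnit (1 + ((h.unit ^ w : (ZMod (p * q))ˣ) : ZMod (p * q))) := by
  have hcast : 1 + ((h.unit ^ w : (ZMod (p * q))ˣ) : ZMod (p * q))
      = ((1 + i ^ w : ℕ) : ZMod (p * q)) := by
    push_cast
    rfl
  rw [hcast, ZMod.isUnit_iff_coprime, Nat.coprime_mul_iff_right, ← ZMod.isUnit_iff_coprime,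
    ← ZMod.isUnit_iff_coprime]
  constructor
  · have : Fact p.Prime := ⟨h.hp⟩
    have : Fact (2 < p) := ⟨by obtain ⟨k, hk⟩ := h.hoddp; have := h.hp.two_le; omega⟩
    rw [isUnit_iff_ne_zero]
    push_cast
    intro h0
    exact pow_ne_neg_one_of_odd_orderOf ZMod.neg_one_ne_one (h.hord ▸ h.hoddq) w
      (eq_neg_of_add_eq_zero_right h0)
  · have hi : (i : ZMod q) = 1 := by simpa using (ZMod.natCast_eq_natCast_iff i 1 q).mpr h.hmod
    have htwo : ((1 + i ^ w : ℕ) : ZMod q) = ((2 : ℕ) : ZMod q) := by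
      push_cast
      rw [hi, one_pow]
      norm_num
    rw [htwo, ZMod.isUnit_iff_coprime]
    exact Nat.coprime_two_left.mpr h.hoddq

theorem isConj_of_left_eq_sr (h : Hyp p q i) {x y : Gpq h} {j j' : ZMod (p * q)}
    (hx : x.left = sr j) (hy : y.left = sr j') (hxy : x.right = y.right) : IsConj x y := by
  obtain ⟨u, hu⟩ := h.isUnit_one_add_unit_pow (toAdd x.right).val
  refine isConj_iff.mpr ⟨SemidirectProduct.inl (r (↑u⁻¹ * (j - j'))), ?_⟩
  ext
  · simp only [SemidirectProduct.mul_left, SemidirectProduct.left_inl,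
      SemidirectProduct.right_inl, ← map_inv, SemidirectProduct.mul_right, map_one,
      MulAut.one_apply, one_mul, hx, hy, inv_r, h.phiG_r, r_mul_sr, sr_mul_r]
    have hm : (1 + ((h.unit ^ (toAdd x.right).val : (ZMod (p * q))ˣ) : ZMod (p * q)))
        * (↑u⁻¹ * (j - j')) = j - j' := by
      rw [← hu, Units.mul_inv_cancel_left]
    congr 1
    linear_combination -hm
  · simp [hxy]

end Hyp

end Mizerka

open Mizerka in
/-- `G_{p,q}^{nil} = N¹_{pq}`, i.e. `N¹_{pq}` is the smallest normal
subgroup of `G_{p,q}` with nilpotent quotient; moreover any two elements of even order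
lying in the same coset of `N¹_{pq}` are conjugate in `G_{p,q}`. -/
theorem statement_17 {p q i : ℕ} (h : Hyp p q i) :
    (∃ _hN : (NpqOneSub h).Normal,
      haveI := _hN
      (Group.IsNilpotent (Gpq h ⧸ NpqOneSub h) ∧
       ∀ N : Subgroup (Gpq h), ∀ hM : N.Normal,
         (haveI := hM; Group.IsNilpotent (Gpq h ⧸ N)) → NpqOneSub h ≤ N)) ∧
    (∀ x y : Gpq h, 2 ∣ orderOf x → 2 ∣ orderOf y → x⁻¹ * y ∈ NpqOneSub h → IsConj x y) := by
  have hker := h.NpqOneSub_eq_ker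
  have hN : (NpqOneSub h).Normal := hker ▸ MonoidHom.normal_ker _
  refine ⟨⟨hN, isNilpotent_quotient_of_eq_ker _ hker,
    fun N _ _ => h.NpqOneSub_le_of_isNilpotent N⟩, ?_⟩
  intro x y hx hy hxy
  obtain ⟨j, hj⟩ := h.exists_left_eq_sr_of_two_dvd_orderOf hx
  obtain ⟨j', hj'⟩ := h.exists_left_eq_sr_of_two_dvd_orderOf hy
  exact h.isConj_of_left_eq_sr hj hj' (inv_mul_eq_one.mp hxy.1)
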